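/- arXiv:1307.0465 — 2 statements merged into one kernel-verified Lean document; each statement's English description precedes it below -/
import Mathlib

section
/- The Grassmann integral is invariant under a unitary change of generators: if b = U a where U is a unitary 2|M| × 2|M| matrix relating two sets of generators written as 2|M|-component vectors, then the corresponding derivation vectors transform as δ/δb = Ū δ/δa, and for any μ ∈ G_M the integral of μ with respect to the new generators equals the integral with respect to the old generators. -/
open Finset Matrix
open scoped Classical ComplexOrder Kronecker

noncomputable section

namespace Grassmann

/-- Coefficient model of the Grassmann algebra over ℂ with generators indexed by a
linearly ordered finite type `ι`: an element is given by its coefficients in the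
basis of increasingly ordered monomials, indexed by `Finset ι`. -/
abbrev Car (ι : Type) := Finset ι → ℂ

variable {ι κ : Type} [LinearOrder ι] [LinearOrder κ]

/-- The unit (empty monomial). -/
def gone : Car ι := fun s => if s = ∅ then 1 else 0

/-- The sign produced when concatenating two increasing monomials. -/
def mulSign (s t : Finset ι) : ℂ :=
  (-1) ^ ((s ×ˢ t).filter fun p => p.2 < p.1).card

/-- The (ordinary, anticommutative) Grassmann product. -/
def gmul (f g : Car ι) : Car ι := fun u =>
  ∑ s ∈ u.powerset, mulSign s (u \ s) * f s * g (u \ s)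

/-- A generator of the Grassmann algebra. -/
def gen (x : ι) : Car ι := fun s => if s = {x} then 1 else 0

/-- Product of a list of Grassmann elements. -/
def lprod : List (Car ι) → Car ι := fun l => l.foldr gmul gone

/-- Powers with respect to the Grassmann product. -/
def gpow (f : Car ι) : ℕ → Car ι
  | 0 => gone
  | n + 1 => gmul f (gpow f n)

/-- The left derivation `δ/δx`. -/
def gderiv (x : ι) (f : Car ι) : Car ι := fun t =>
  if x ∈ t then 0
  else (-1) ^ (t.filter fun y => y < x).card * f (insert x t)

/-- The exponential of a Grassmann element (a finite sum by nilpotency). -/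
def gexp [Fintype ι] (f : Car ι) : Car ι :=
  ∑ m ∈ Finset.range (2 * Fintype.card ι + 1), ((Nat.factorial m : ℂ)⁻¹) • gpow f m

/-- The sign produced when relabelling generators along an injection. -/
def relabelSign (g : ι ↪ κ) (s : Finset ι) : ℂ :=
  (-1) ^ ((s ×ˢ s).filter fun p => p.1 < p.2 ∧ g p.2 < g p.1).card

/-- The algebra homomorphism induced by relabelling generators along an injection. -/
def relabel [Fintype ι] (g : ι ↪ κ) (f : Car ι) : Car κ := fun t =>
  ∑ s : Finset ι, if s.map g = t then relabelSign g s * f s else 0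

variable (M : Type) [Fintype M] [LinearOrder M]

/-- Index type for the generators `ψ̄ᵢ` (`true`) and `ψᵢ` (`false`). -/
abbrev Idx := Bool ×ₗ M

instance : Fintype (Idx M) := inferInstanceAs (Fintype (Bool × M))

/-- The generator `ψᵢ`. -/
def psi (i : M) : Car (Idx M) := gen (toLex (false, i))

/-- The generator `ψ̄ᵢ`. -/
def psibar (i : M) : Car (Idx M) := gen (toLex (true, i))

/-- The elements of a finite set in increasing order. -/
def msort (s : Finset M) : List M := s.sort (· ≤ ·)

/-- `Ψ_J = ψ_{j₁} ⋯ ψ_{j_n}` for the ordered set `J`. -/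
def psiProd (J : Finset M) : Car (Idx M) := lprod ((msort M J).map (psi M))

/-- `Ψ̄_I = ψ̄_{i₁} ⋯ ψ̄_{i_m}` for the ordered set `I`. -/
def psibarProd (I : Finset M) : Car (Idx M) := lprod ((msort M I).map (psibar M))

/-- The normal-ordered monomial `Ψ̄_I Ψ_J`. -/
def nmono (I J : Finset M) : Car (Idx M) := gmul (psibarProd M I) (psiProd M J)

/-- The Grassmann integral `∫ d(Ψ̄,Ψ) = ∏_{α∈M} δ/δψ̄_α δ/δψ_α`. -/
def gintegral (f : Car (Idx M)) : ℂ :=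
  ((msort M univ).foldr
    (fun i g => gderiv (toLex (true, i)) (gderiv (toLex (false, i)) g)) f) ∅

/-- The pairing `(Ψ̄,Ψ) = ∑ᵢ ψ̄ᵢ ψᵢ`. -/
def pairPsi : Car (Idx M) := ∑ i : M, gmul (psibar M i) (psi M i)

/-- The weight `e^{2(Ψ̄,Ψ)} = ∏_α (1 + 2 ψ̄_α ψ_α)`. -/
def weight : Car (Idx M) :=
  lprod ((msort M univ).map fun i => gone + (2 : ℂ) • gmul (psibar M i) (psi M i))

/-- The weighted Grassmann integral `∫ 𝒟(Ψ̄,Ψ) = ∫ d(Ψ̄,Ψ) e^{2(Ψ̄,Ψ)}`. -/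
def wintegral (f : Car (Idx M)) : ℂ := gintegral M (gmul (weight M) f)

/-- Index type for the doubled algebra in the variables `ψ̄, ψ` (family `false`)
and `φ̄, φ` (family `true`). -/
abbrev BIdx := Bool ×ₗ (Idx M)

instance : Fintype (BIdx M) := inferInstanceAs (Fintype (Bool × (Bool × M)))

/-- The (order-preserving) embedding of the `ψ`-variables into the doubled algebra. -/
def embPsi : Idx M ↪ BIdx M :=
  ⟨fun x => toLex (false, x), fun a b h => congrArg (fun z : BIdx M => (ofLex z).2) h⟩

/-- Substitution `μ(ψ̄,ψ) ↦ μ(ψ̄,φ)`. -/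
def subMu : Idx M ↪ BIdx M :=
  ⟨fun x => toLex (!(ofLex x).1, x), fun a b h => congrArg (fun z : BIdx M => (ofLex z).2) h⟩

/-- Substitution `η(ψ̄,ψ) ↦ η(φ̄,ψ)`. -/
def subEta : Idx M ↪ BIdx M :=
  ⟨fun x => toLex ((ofLex x).1, x), fun a b h => congrArg (fun z : BIdx M => (ofLex z).2) h⟩

/-- Generator `ψᵢ` in the doubled algebra. -/
def psiB (i : M) : Car (BIdx M) := gen (toLex (false, toLex (false, i)))
/-- Generator `ψ̄ᵢ` in the doubled algebra. -/
def psibarB (i : M) : Car (BIdx M) := gen (toLex (false, toLex (true, i)))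
/-- Generator `φᵢ` in the doubled algebra. -/
def phiB (i : M) : Car (BIdx M) := gen (toLex (true, toLex (false, i)))
/-- Generator `φ̄ᵢ` in the doubled algebra. -/
def phibarB (i : M) : Car (BIdx M) := gen (toLex (true, toLex (true, i)))

/-- Pairing `(Ā,B) = ∑ᵢ āᵢ bᵢ` in the doubled algebra. -/
def pairB (f g : M → Car (BIdx M)) : Car (BIdx M) := ∑ i : M, gmul (f i) (g i)

/-- The kernel `e^{-(Ψ̄,Ψ)} e^{(Ψ̄,Φ)} e^{-(Φ̄,Φ)} e^{(Φ̄,Ψ)}`. -/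
def kernel : Car (BIdx M) :=
  gmul (gexp (-(pairB M (psibarB M) (psiB M))))
    (gmul (gexp (pairB M (psibarB M) (phiB M)))
      (gmul (gexp (-(pairB M (phibarB M) (phiB M))))
        (gexp (pairB M (phibarB M) (psiB M)))))

/-- Integration over the `φ` variables, `∫ d(Φ̄,Φ)`. -/
def intPhi (f : Car (BIdx M)) : Car (BIdx M) :=
  ((msort M univ).foldr
    (fun i g => gderiv (toLex (true, toLex (true, i)))
      (gderiv (toLex (true, toLex (false, i))) g)) f)

/-- Reading off the result (in the `ψ` variables only) after `φ`-integration. -/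
def projBack (f : Car (BIdx M)) : Car (Idx M) := fun s => f (s.map (embPsi M))

/-- The star product
`(μ⋆η)(ψ̄,ψ) = ∫ d(Φ̄,Φ) μ(ψ̄,φ) η(φ̄,ψ) e^{-(Ψ̄,Ψ)} e^{(Ψ̄,Φ)} e^{-(Φ̄,Φ)} e^{(Φ̄,Ψ)}`. -/
def gstar (μ η : Car (Idx M)) : Car (Idx M) :=
  projBack M (intPhi M
    (gmul (relabel (subMu M) μ) (gmul (relabel (subEta M) η) (kernel M))))

/-- Star product of a list. -/
def lstar (l : List (Car (Idx M))) : Car (Idx M) := l.foldr (gstar M) (gone)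

/-- Swapping `ψᵢ ↔ ψ̄ᵢ`. -/
def barSwap : Idx M → Idx M := fun x => toLex (!(ofLex x).1, (ofLex x).2)

/-- The sign of the involution on a basis monomial. -/
def involSign (s : Finset (Idx M)) : ℂ :=
  (-1) ^ ((s ×ˢ s).filter fun p => p.1 < p.2 ∧ barSwap M p.1 < barSwap M p.2).card

/-- The involution `*` of the Grassmann algebra: antilinear, `ψᵢ* = ψ̄ᵢ`, `ψ̄ᵢ* = ψᵢ`,
reversing products. -/
def ginvol (f : Car (Idx M)) : Car (Idx M) := fun t =>
  involSign M (t.image (barSwap M)) * (starRingEnd ℂ) (f (t.image (barSwap M)))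

/-! ### The fermion Fock space `∧H` and the normal-ordering map `Θ` -/

/-- The fermion Fock space over `H = ℂ^M`, in the occupation basis. -/
abbrev Fock := Finset M → ℂ

/-- The creation operator `c*ᵢ`. -/
def createL (i : M) : Fock M →ₗ[ℂ] Fock M where
  toFun f := fun s =>
    if i ∈ s then (-1) ^ (((s.erase i)).filter fun j => j < i).card * f (s.erase i) else 0
  map_add' f g := by funext s; by_cases h : i ∈ s <;> simp [h, mul_add]
  map_smul' c f := by funext s; by_cases h : i ∈ s <;> simp [h] <;> ring

/-- The annihilation operator `cᵢ`. -/
def annihL (i : M) : Fock M →ₗ[ℂ] Fock M where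
  toFun f := fun s =>
    if i ∈ s then 0 else (-1) ^ (s.filter fun j => j < i).card * f (insert i s)
  map_add' f g := by funext s; by_cases h : i ∈ s <;> simp [h, mul_add]
  map_smul' c f := by funext s; by_cases h : i ∈ s <;> simp [h] <;> ring

/-- The normal-ordered operator monomial `c*_{i₁}⋯c*_{i_m} c_{j₁}⋯c_{j_n}`
for ordered sets `I`, `J`. -/
def cOp (I J : Finset M) : Fock M →ₗ[ℂ] Fock M :=
  ((msort M I).map (createL M)).prod * ((msort M J).map (annihL M)).prod

/-- The adjoint of an operator on the Fock space. -/
def adjOp (A : Fock M →ₗ[ℂ] Fock M) : Fock M →ₗ[ℂ] Fock M :=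
  Matrix.toLin (Pi.basisFun ℂ (Finset M)) (Pi.basisFun ℂ (Finset M))
    ((LinearMap.toMatrix (Pi.basisFun ℂ (Finset M)) (Pi.basisFun ℂ (Finset M)) A).conjTranspose)

/-! ### Density matrices of a Grassmann density -/

/-- The one-particle density matrix `γ_th`, `⟨ψ_k, γ_th ψ_l⟩ = ∫𝒟 th*⋆th⋆ψ̄_l⋆ψ_k`. -/
def gammaM (th : Car (Idx M)) : Matrix M M ℂ := fun k l =>
  wintegral M (gstar M (gstar M (ginvol M th) th) (gstar M (psibar M l) (psi M k)))

/-- The two-particle density matrix `Γ_th`,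
`⟨ψ_m⊗ψ_n, Γ_th (ψ_l⊗ψ_k)⟩ = ∫𝒟 th*⋆th⋆ψ̄_k⋆ψ̄_l⋆ψ_m⋆ψ_n`. -/
def GammaM (th : Car (Idx M)) : Matrix (M × M) (M × M) ℂ := fun p q =>
  wintegral M (gstar M (gstar M (ginvol M th) th)
    (gstar M (psibar M q.2) (gstar M (psibar M q.1) (gstar M (psi M p.1) (psi M p.2)))))

/-- Positive semi-definiteness of a complex matrix: `⟨x, A x⟩ ≥ 0` for all vectors. -/
def PSDvec {n : Type} [Fintype n] (A : Matrix n n ℂ) : Prop :=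
  ∀ x : n → ℂ, 0 ≤ star x ⬝ᵥ A.mulVec x

/-- The exchange operator `Ex (f⊗g) = g⊗f` on `H⊗H`. -/
def ExM : Matrix (M × M) (M × M) ℂ := fun p q =>
  if p.1 = q.2 ∧ p.2 = q.1 then 1 else 0

end Grassmann
namespace Grassmann

/-- The new generators `b = U a`. -/
def genImage (M : Type) [Fintype M] [LinearOrder M] (U : Matrix (Idx M) (Idx M) ℂ)
    (x : Idx M) : Car (Idx M) :=
  ∑ y : Idx M, U x y • gen y

/-- Substituting the new generators `b = U a` into an element `μ`,
i.e. forming `μ(χ̄,χ)`. -/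
def subst (M : Type) [Fintype M] [LinearOrder M] (U : Matrix (Idx M) (Idx M) ℂ)
    (f : Car (Idx M)) : Car (Idx M) :=
  ∑ s : Finset (Idx M), f s • lprod ((s.sort (· ≤ ·)).map (genImage M U))

/-- The transformed derivations `δ/δb = Ū δ/δa`. -/
def newDeriv (M : Type) [Fintype M] [LinearOrder M] (U : Matrix (Idx M) (Idx M) ℂ)
    (x : Idx M) (f : Car (Idx M)) : Car (Idx M) :=
  ∑ y : Idx M, (starRingEnd ℂ) (U x y) • gderiv y f

/-- Grassmann integration with respect to the new generators,
`∏_α δ/δχ̄_α δ/δχ_α`. -/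
def newIntegral (M : Type) [Fintype M] [LinearOrder M] (U : Matrix (Idx M) (Idx M) ℂ)
    (f : Car (Idx M)) : ℂ :=
  ((msort M Finset.univ).foldr
    (fun i g => newDeriv M U (toLex (true, i)) (newDeriv M U (toLex (false, i)) g)) f) ∅

end Grassmann

/-!
Substituting the new generators `b = U a` is an algebra homomorphism `S`, and both `δ/δa_x`
and `δ/δb_x = ∑_y Ū_{xy} δ/δa_y` are odd derivations. Unitarity, `U Uᴴ = 1`, says exactly that
`δ/δb_x b_z = δ_{xz}`, so `δ/δb_x ∘ S` and `S ∘ δ/δa_x` obey the same graded Leibniz recursion on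
ordered monomials and hence agree (chain rule). Iterating, the new integral of `S μ` is `S`
applied to the iterated old derivative of `μ`, read off at the empty monomial, and `S` does not
change that coefficient.
-/

namespace Finset

variable {α : Type*} [LinearOrder α]

theorem sort_insert_eq_orderedInsert {z : α} {t : Finset α} (hz : z ∉ t) :
    (insert z t).sort (· ≤ ·) = (t.sort (· ≤ ·)).orderedInsert (· ≤ ·) z := by
  refine List.Perm.eq_of_sortedLE (Finset.sortedLT_sort _).sortedLE
    (List.sortedLE_iff_pairwise.mpr ((Finset.pairwise_sort t _).orderedInsert _ _))
    ((Multiset.coe_eq_coe.mp ?_).trans (List.perm_orderedInsert _ _ _).symm)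
  rw [Finset.sort_eq, ← Multiset.cons_coe, Finset.sort_eq, Finset.insert_val_of_notMem hz]

theorem length_filter_sort (t : Finset α) (p : α → Prop) [DecidablePred p] :
    ((t.sort (· ≤ ·)).filter p).length = (t.filter p).card := by
  rw [Finset.card_def, Finset.filter_val, ← Finset.sort_eq t (· ≤ ·), Multiset.filter_coe,
    Multiset.coe_card]

end Finset

namespace Matrix

theorem conjTranspose_transpose_mul_transpose_eq_one {n R : Type*} [Fintype n] [DecidableEq n]
    [CommRing R] [StarRing R] {U : Matrix n n R} (hU : U ∈ unitaryGroup n R) : Uᴴᵀ * Uᵀ = 1 := by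
  rw [← transpose_mul, ← star_eq_conjTranspose, mem_unitaryGroup_iff.mp hU, transpose_one]

end Matrix

namespace Grassmann

section Algebra

variable {ι : Type} [LinearOrder ι]

theorem neg_one_pow_mul_self (n : ℕ) : (-1 : ℂ) ^ n * (-1) ^ n = 1 := by
  rw [← mul_pow, neg_one_mul, neg_neg, one_pow]

def gmulLeft (f : Car ι) : Car ι →ₗ[ℂ] Car ι where
  toFun := gmul f
  map_add' g₁ g₂ := by
    funext u; simp only [gmul, Pi.add_apply, mul_add, Finset.sum_add_distrib]
  map_smul' c g := by
    funext u
    simp only [gmul, Pi.smul_apply, smul_eq_mul, RingHom.id_apply, Finset.mul_sum]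
    exact Finset.sum_congr rfl fun _ _ => by ring

def gderivₗ (x : ι) : Car ι →ₗ[ℂ] Car ι where
  toFun := gderiv x
  map_add' f g := by funext t; simp only [gderiv, Pi.add_apply]; split_ifs <;> ring
  map_smul' c f := by
    funext t; simp only [gderiv, Pi.smul_apply, smul_eq_mul, RingHom.id_apply]; split_ifs <;> ring

theorem gmul_smul_right (f : Car ι) (c : ℂ) (g : Car ι) : gmul f (c • g) = c • gmul f g :=
  map_smul (gmulLeft f) c g

theorem gmul_sum_right {α : Type*} (f : Car ι) (S : Finset α) (g : α → Car ι) :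
    gmul f (∑ i ∈ S, g i) = ∑ i ∈ S, gmul f (g i) :=
  map_sum (gmulLeft f) g S

theorem gmul_zero_right (f : Car ι) : gmul f 0 = 0 :=
  map_zero (gmulLeft f)

theorem gderiv_smul (x : ι) (c : ℂ) (f : Car ι) : gderiv x (c • f) = c • gderiv x f :=
  map_smul (gderivₗ x) c f

theorem gderiv_sum {α : Type*} (x : ι) (S : Finset α) (f : α → Car ι) :
    gderiv x (∑ i ∈ S, f i) = ∑ i ∈ S, gderiv x (f i) :=
  map_sum (gderivₗ x) f S

theorem gmul_gen (w : ι) (h : Car ι) (u : Finset ι) :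
    gmul (gen w) h u =
      if w ∈ u then (-1 : ℂ) ^ ((u.erase w).filter (· < w)).card * h (u.erase w) else 0 := by
  rw [gmul]
  split_ifs with hw
  · rw [Finset.sum_eq_single_of_mem {w} (by simpa using hw) fun s _ hs => by simp [gen, hs],
      ← Finset.erase_eq, gen, if_pos rfl, mul_one, mulSign, Finset.singleton_product,
      Finset.filter_map, Finset.card_map]
    rfl
  · refine Finset.sum_eq_zero fun s hs => ?_
    have : s ≠ {w} := by rintro rfl; exact hw (by simpa using hs)
    rw [gen, if_neg this, mul_zero, zero_mul]

theorem gmul_gone (f : Car ι) : gmul f gone = f := by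
  funext u
  rw [gmul, Finset.sum_eq_single_of_mem u (Finset.mem_powerset_self u) fun s hs hsu => by
      rw [gone, if_neg (Finset.sdiff_eq_empty_iff_subset.not.mpr fun h =>
        hsu ((Finset.mem_powerset.mp hs).antisymm h)), mul_zero]]
  simp [gone, mulSign]

theorem gmul_apply_empty (f h : Car ι) : gmul f h ∅ = f ∅ * h ∅ := by
  simp [gmul, mulSign]

theorem gderiv_gone (x : ι) : gderiv x (gone : Car ι) = 0 := by
  funext t
  simp [gderiv, gone]

theorem gmul_gen_single (z : ι) (t : Finset ι) :
    gmul (gen z) (Pi.single t 1) =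
      if z ∈ t then 0 else (-1 : ℂ) ^ (t.filter (· < z)).card • Pi.single (insert z t) 1 := by
  funext u
  rw [gmul_gen]
  by_cases hu : z ∉ t ∧ u = insert z t
  · obtain ⟨hz, rfl⟩ := hu
    simp [hz, Finset.erase_insert hz]
  · have : ¬ (z ∈ u ∧ u.erase z = t) := by
      rintro ⟨hzu, rfl⟩
      exact hu ⟨Finset.notMem_erase z u, (Finset.insert_erase hzu).symm⟩
    split_ifs <;> simp_all

theorem single_empty_eq_gone : (Pi.single ∅ 1 : Car ι) = gone := by
  funext t
  simp [Pi.single_apply, gone]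

theorem gmul_gen_single_of_lt {a : ι} {s : Finset ι} (h : ∀ x ∈ s, a < x) :
    gmul (gen a) (Pi.single s 1) = Pi.single (insert a s) 1 := by
  rw [gmul_gen_single, if_neg fun ha => lt_irrefl a (h a ha),
    Finset.filter_false_of_mem fun x hx => not_lt.mpr (h x hx).le, Finset.card_empty, pow_zero,
    one_smul]

theorem card_filter_insert_lt {z x : ι} {s : Finset ι} (hx : x ∉ s) :
    ((insert x s).filter (· < z)).card = (s.filter (· < z)).card + if x < z then 1 else 0 := by
  rw [Finset.filter_insert]
  split_ifs
  · rw [Finset.card_insert_of_notMem fun h => hx (Finset.mem_of_mem_filter x h)]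
  · rfl

theorem gderiv_gmul_gen (y w : ι) (h : Car ι) :
    gderiv y (gmul (gen w) h) = (if y = w then h else 0) - gmul (gen w) (gderiv y h) := by
  funext t
  simp only [Pi.sub_apply]
  by_cases hyw : y = w
  · subst hyw
    rw [if_pos rfl]
    by_cases hyt : y ∈ t
    · rw [gderiv, if_pos hyt, gmul_gen, if_pos hyt, gderiv, if_neg (Finset.notMem_erase y t),
        Finset.insert_erase hyt, ← mul_assoc, neg_one_pow_mul_self, one_mul, sub_self]
    · rw [gderiv, if_neg hyt, gmul_gen, if_pos (Finset.mem_insert_self y t),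
        Finset.erase_insert hyt, gmul_gen, if_neg hyt, sub_zero, ← mul_assoc,
        neg_one_pow_mul_self, one_mul]
  rw [if_neg hyw, Pi.zero_apply, zero_sub]
  by_cases hyt : y ∈ t
  · rw [gderiv, if_pos hyt, gmul_gen]
    split_ifs with hwt
    · rw [gderiv, if_pos (Finset.mem_erase.mpr ⟨hyw, hyt⟩), mul_zero, neg_zero]
    · rw [neg_zero]
  by_cases hwt : w ∈ t
  · have hyE : y ∉ t.erase w := fun h' => hyt (Finset.mem_of_mem_erase h')
    rw [gderiv, if_neg hyt, gmul_gen, if_pos (Finset.mem_insert_of_mem hwt),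
      Finset.erase_insert_of_ne hyw, gmul_gen, if_pos hwt, gderiv, if_neg hyE,
      card_filter_insert_lt hyE]
    have hcard : (t.filter (· < y)).card =
        ((t.erase w).filter (· < y)).card + if w < y then 1 else 0 := by
      conv_lhs => rw [← Finset.insert_erase hwt]
      exact card_filter_insert_lt (Finset.notMem_erase w t)
    rw [hcard]
    rcases lt_or_gt_of_ne hyw with hlt | hgt
    · rw [if_pos hlt, if_neg (not_lt.mpr hlt.le)]
      ring
    · rw [if_neg (not_lt.mpr hgt.le), if_pos hgt]
      ring
  · have hwi : w ∉ insert y t := by simp [Ne.symm hyw, hwt]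
    rw [gderiv, if_neg hyt, gmul_gen, if_neg hwi, mul_zero, gmul_gen, if_neg hwt, neg_zero]

theorem gmul_gen_gen_self (a : ι) (h : Car ι) : gmul (gen a) (gmul (gen a) h) = 0 := by
  funext t
  rw [gmul_gen, Pi.zero_apply]
  split_ifs
  · rw [gmul_gen, if_neg (Finset.notMem_erase a t), mul_zero]
  · rfl

theorem gmul_gen_gen_swap {a b : ι} (hab : a ≠ b) (h : Car ι) :
    gmul (gen a) (gmul (gen b) h) = -gmul (gen b) (gmul (gen a) h) := by
  funext t
  simp only [Pi.neg_apply]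
  by_cases hat : a ∈ t <;> by_cases hbt : b ∈ t
  · have hba : b ∈ t.erase a := Finset.mem_erase.mpr ⟨hab.symm, hbt⟩
    have hab' : a ∈ t.erase b := Finset.mem_erase.mpr ⟨hab, hat⟩
    have hcomm : (t.erase a).erase b = (t.erase b).erase a := Finset.erase_right_comm
    rw [gmul_gen, if_pos hat, gmul_gen, if_pos hba, gmul_gen, if_pos hbt, gmul_gen,
      if_pos hab', hcomm]
    set s := (t.erase b).erase a
    have hbs : b ∉ s := fun h' => Finset.notMem_erase b t (Finset.mem_of_mem_erase h')
    have has : a ∉ s := Finset.notMem_erase a _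
    have e1 : t.erase a = insert b s := by rw [← hcomm]; exact (Finset.insert_erase hba).symm
    have e2 : t.erase b = insert a s := (Finset.insert_erase hab').symm
    rw [e1, e2, card_filter_insert_lt hbs, card_filter_insert_lt has]
    rcases lt_or_gt_of_ne hab with hlt | hgt
    · rw [if_neg (not_lt.mpr hlt.le), if_pos hlt]
      ring
    · rw [if_pos hgt, if_neg (not_lt.mpr hgt.le)]
      ring
  · rw [gmul_gen, if_pos hat, gmul_gen, if_neg fun h' => hbt (Finset.mem_of_mem_erase h'),
      gmul_gen, if_neg hbt, mul_zero, neg_zero]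
  · rw [gmul_gen, if_neg hat, gmul_gen, if_pos hbt, gmul_gen,
      if_neg fun h' => hat (Finset.mem_of_mem_erase h'), mul_zero, neg_zero]
  · rw [gmul_gen, if_neg hat, gmul_gen, if_neg hbt, neg_zero]

theorem gmul_gen_anticomm (a b : ι) (h : Car ι) :
    gmul (gen a) (gmul (gen b) h) = -gmul (gen b) (gmul (gen a) h) := by
  rcases eq_or_ne a b with rfl | hab
  · rw [gmul_gen_gen_self, neg_zero]
  · exact gmul_gen_gen_swap hab h

end Algebra

section Linear

variable {ι : Type} [LinearOrder ι] [Fintype ι]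

def lin (c : ι → ℂ) : Car ι := ∑ y, c y • gen y

theorem gmul_lin_left (c : ι → ℂ) (h : Car ι) : gmul (lin c) h = ∑ y, c y • gmul (gen y) h := by
  funext u
  simp only [lin, gmul, Finset.sum_apply, Pi.smul_apply, smul_eq_mul, Finset.mul_sum,
    Finset.sum_mul]
  rw [Finset.sum_comm]
  exact Finset.sum_congr rfl fun _ _ => Finset.sum_congr rfl fun _ _ => by ring

theorem gmul_lin_anticomm (c d : ι → ℂ) (h : Car ι) :
    gmul (lin c) (gmul (lin d) h) = -gmul (lin d) (gmul (lin c) h) := by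
  simp only [gmul_lin_left, gmul_sum_right, gmul_smul_right, Finset.smul_sum, smul_smul]
  rw [Finset.sum_comm, ← Finset.sum_neg_distrib]
  refine Finset.sum_congr rfl fun y _ => ?_
  rw [← Finset.sum_neg_distrib]
  refine Finset.sum_congr rfl fun z _ => ?_
  rw [gmul_gen_anticomm, smul_neg, mul_comm]

theorem gmul_lin_self (c : ι → ℂ) (h : Car ι) : gmul (lin c) (gmul (lin c) h) = 0 :=
  self_eq_neg.mp (gmul_lin_anticomm c c h)

variable (F : Matrix ι ι ℂ)

theorem gmul_lin_lprod_of_mem {z : ι} {l : List ι} (hz : z ∈ l) :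
    gmul (lin (F z)) (lprod (l.map fun x => lin (F x))) = 0 := by
  induction l with
  | nil => simp at hz
  | cons a l ih =>
    change gmul (lin (F z)) (gmul (lin (F a)) (lprod (l.map fun x => lin (F x)))) = 0
    rcases List.mem_cons.mp hz with rfl | hz
    · exact gmul_lin_self _ _
    · rw [gmul_lin_anticomm, ih hz, gmul_zero_right, neg_zero]

theorem lprod_orderedInsert (z : ι) {l : List ι} (hl : l.Pairwise (· ≤ ·)) :
    lprod ((l.orderedInsert (· ≤ ·) z).map fun x => lin (F x)) =
      (-1 : ℂ) ^ (l.filter (· < z)).length •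
        gmul (lin (F z)) (lprod (l.map fun x => lin (F x))) := by
  induction l with
  | nil => simp [lprod]
  | cons a l ih =>
    by_cases hza : z ≤ a
    · have : (a :: l).filter (· < z) = [] := List.filter_eq_nil_iff.mpr fun x hx => by
        rcases List.mem_cons.mp hx with rfl | hx
        · simpa using hza
        · simpa using hza.trans (List.rel_of_pairwise_cons hl hx)
      rw [List.orderedInsert_cons_of_le _ _ hza, this, List.length_nil, pow_zero, one_smul]
      rfl
    · rw [List.orderedInsert_of_not_le _ _ hza, List.filter_cons_of_pos (by simpa using hza),
        List.length_cons, pow_succ, mul_neg_one, neg_smul]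
      change gmul (lin (F a)) (lprod ((l.orderedInsert (· ≤ ·) z).map fun x => lin (F x))) =
        -((-1 : ℂ) ^ (l.filter (· < z)).length •
          gmul (lin (F z)) (gmul (lin (F a)) (lprod (l.map fun x => lin (F x)))))
      rw [ih hl.of_cons, gmul_smul_right, gmul_lin_anticomm, smul_neg]

theorem gmul_lin_lprod_sort (z : ι) (t : Finset ι) :
    gmul (lin (F z)) (lprod ((t.sort (· ≤ ·)).map fun x => lin (F x))) =
      if z ∈ t then 0
      else (-1 : ℂ) ^ (t.filter (· < z)).card •
        lprod (((insert z t).sort (· ≤ ·)).map fun x => lin (F x)) := by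
  split_ifs with hz
  · exact gmul_lin_lprod_of_mem F ((Finset.mem_sort _).mpr hz)
  · rw [sort_insert_eq_orderedInsert hz, lprod_orderedInsert F z (Finset.pairwise_sort t _),
      length_filter_sort, smul_smul, neg_one_pow_mul_self, one_smul]

/-- The substitution `μ(a) ↦ μ(b)` of the new generators `b_x = lin (F x)` for the old ones. -/
def linSubst : Car ι →ₗ[ℂ] Car ι :=
  Fintype.linearCombination ℂ fun s => lprod ((s.sort (· ≤ ·)).map fun x => lin (F x))

theorem linSubst_single (s : Finset ι) :
    linSubst F (Pi.single s 1) = lprod ((s.sort (· ≤ ·)).map fun x => lin (F x)) := by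
  rw [linSubst, Fintype.linearCombination_apply_single, one_smul]

theorem linSubst_gone : linSubst F gone = gone := by
  rw [← single_empty_eq_gone, linSubst_single, Finset.sort_empty, single_empty_eq_gone]
  rfl

theorem linSubst_gmul_gen (z : ι) (g : Car ι) :
    linSubst F (gmul (gen z) g) = gmul (lin (F z)) (linSubst F g) := by
  suffices (linSubst F).comp (gmulLeft (gen z)) = (gmulLeft (lin (F z))).comp (linSubst F) from
    LinearMap.congr_fun this g
  refine (Pi.basisFun ℂ (Finset ι)).ext fun t => ?_
  change linSubst F (gmul (gen z) (Pi.basisFun ℂ _ t)) = gmul (lin (F z)) (linSubst F _)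
  rw [Pi.basisFun_apply, gmul_gen_single, linSubst_single, gmul_lin_lprod_sort]
  split_ifs
  · exact map_zero _
  · rw [map_smul, linSubst_single]

theorem linSubst_single_apply_empty (s : Finset ι) :
    linSubst F (Pi.single s 1) ∅ = (Pi.single s 1 : Car ι) ∅ := by
  induction s using Finset.induction_on_min with
  | empty => simp [linSubst_single, lprod, gone]
  | insert a s has _ =>
    rw [← gmul_gen_single_of_lt has, linSubst_gmul_gen, gmul_apply_empty, gmul_apply_empty]
    simp [lin, gen]

theorem linSubst_apply_empty (f : Car ι) : linSubst F f ∅ = f ∅ := by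
  suffices (LinearMap.proj ∅).comp (linSubst F) = LinearMap.proj (R := ℂ) (φ := fun _ => ℂ) ∅ from
    LinearMap.congr_fun this f
  exact (Pi.basisFun ℂ (Finset ι)).ext fun s => by
    simpa using linSubst_single_apply_empty F s

def linDeriv (c : ι → ℂ) : Car ι →ₗ[ℂ] Car ι := ∑ y, c y • gderivₗ y

theorem linDeriv_apply (c : ι → ℂ) (f : Car ι) : linDeriv c f = ∑ y, c y • gderiv y f := by
  rw [linDeriv, LinearMap.sum_apply]
  rfl

theorem linDeriv_gone (c : ι → ℂ) : linDeriv c gone = 0 := by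
  simp [linDeriv_apply, gderiv_gone]

theorem linDeriv_gmul_lin (c d : ι → ℂ) (h : Car ι) :
    linDeriv c (gmul (lin d) h) = (c ⬝ᵥ d) • h - gmul (lin d) (linDeriv c h) := by
  simp only [linDeriv_apply, gmul_lin_left, gderiv_sum, gderiv_smul, gderiv_gmul_gen, smul_sub,
    Finset.sum_sub_distrib, gmul_sum_right, gmul_smul_right, Finset.smul_sum, smul_ite,
    smul_zero, Finset.sum_ite_eq, Finset.mem_univ, if_true, smul_smul, dotProduct, Finset.sum_smul]

theorem linDeriv_lin (c d : ι → ℂ) : linDeriv c (lin d) = (c ⬝ᵥ d) • gone := by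
  simpa [gmul_gone, linDeriv_gone, gmul_zero_right] using linDeriv_gmul_lin c d gone

theorem dotProduct_eq_ite_of_mul_transpose_eq_one {C : Matrix ι ι ℂ} (hCF : C * Fᵀ = 1)
    (x z : ι) : C x ⬝ᵥ F z = if x = z then 1 else 0 := by
  rw [← one_apply, ← hCF, mul_apply']
  rfl

theorem linDeriv_linSubst {C : Matrix ι ι ℂ} (hCF : C * Fᵀ = 1) (x : ι) (f : Car ι) :
    linDeriv (C x) (linSubst F f) = linSubst F (gderiv x f) := by
  have hstep (a : ι) (g : Car ι) (hg : linDeriv (C x) (linSubst F g) = linSubst F (gderiv x g)) :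
      linDeriv (C x) (linSubst F (gmul (gen a) g)) =
        linSubst F (gderiv x (gmul (gen a) g)) := by
    rw [linSubst_gmul_gen, linDeriv_gmul_lin, dotProduct_eq_ite_of_mul_transpose_eq_one F hCF, hg, gderiv_gmul_gen, map_sub,
      linSubst_gmul_gen]
    split_ifs <;> simp
  suffices (linDeriv (C x)).comp (linSubst F) = (linSubst F).comp (gderivₗ x) from
    LinearMap.congr_fun this f
  refine (Pi.basisFun ℂ (Finset ι)).ext fun s => ?_
  simp only [LinearMap.comp_apply, Pi.basisFun_apply]
  induction s using Finset.induction_on_min with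
  | empty =>
    rw [single_empty_eq_gone, linSubst_gone, linDeriv_gone]
    exact (map_zero (linSubst F)).symm.trans (congrArg _ (gderiv_gone x).symm)
  | insert a s has ih =>
    rw [← gmul_gen_single_of_lt has]
    exact hstep a _ ih

end Linear

section Idx

variable {M : Type} [Fintype M] [LinearOrder M] {U : Matrix (Idx M) (Idx M) ℂ}

theorem genImage_eq_lin (x : Idx M) : genImage M U x = lin (U x) := rfl

theorem subst_eq_linSubst (f : Car (Idx M)) : subst M U f = linSubst U f :=
  (Fintype.linearCombination_apply ℂ _ f).symm

theorem newDeriv_eq_linDeriv (x : Idx M) (f : Car (Idx M)) :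
    newDeriv M U x f = linDeriv (Uᴴᵀ x) f :=
  (linDeriv_apply _ f).symm

end Idx

end Grassmann

open Grassmann in
/-- invariance of the Grassmann integral under a unitary change of
generators: the derivations `δ/δb = Ū δ/δa` satisfy `δ/δb_j b_i = δ_ij`, and the
integral of `μ(χ̄,χ)` with respect to the new generators equals the integral of
`μ(ψ̄,ψ)` with respect to the old ones. -/
theorem statement1 (M : Type) [Fintype M] [LinearOrder M]
    (U : Matrix (Idx M) (Idx M) ℂ) (hU : U ∈ Matrix.unitaryGroup (Idx M) ℂ) :
    (∀ x x' : Idx M,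
      newDeriv M U x (genImage M U x') = if x = x' then gone else 0) ∧
    (∀ μ : Car (Idx M), newIntegral M U (subst M U μ) = gintegral M μ) := by
  have hdual := conjTranspose_transpose_mul_transpose_eq_one hU
  have hchain (x : Idx M) (f : Car (Idx M)) :
      newDeriv M U x (subst M U f) = subst M U (gderiv x f) := by
    rw [newDeriv_eq_linDeriv, subst_eq_linSubst, subst_eq_linSubst, linDeriv_linSubst U hdual]
  refine ⟨fun x x' => ?_, fun μ => ?_⟩
  · rw [newDeriv_eq_linDeriv, genImage_eq_lin, linDeriv_lin,
      dotProduct_eq_ite_of_mul_transpose_eq_one U hdual, ite_smul, one_smul, zero_smul]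
  · rw [newIntegral, List.foldr_hom (subst M U) fun i g => by rw [hchain, hchain],
      subst_eq_linSubst, linSubst_apply_empty, gintegral]
end
end

section
/- The normal-ordering map Θ is compatible with the involutions: for every bounded operator A on the fermion Fock space ∧H, Θ(A*) = (Θ(A))*. -/
/-!
Both `A ↦ Θ (A*)` and `A ↦ (Θ A)*` are conjugate-linear, so it suffices to compare them on the
normal-ordered monomials `c*_I c_J`. These span all operators: `Θ` is injective and maps them to
the monomials `ψ̄_I ψ_J`, which are (up to sign) the coordinate basis of the Grassmann algebra.
On a monomial, taking adjoints reverses the product and turns creators into annihilators;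
re-sorting the pairwise anticommuting factors gives
`(c*_I c_J)* = (-1)^(C(|I|,2) + C(|J|,2)) c*_J c_I`, and the Grassmann involution produces the
same sign, `(ψ̄_I ψ_J)* = (-1)^(C(|I|,2) + C(|J|,2)) ψ̄_J ψ_I`.
-/

open Finset Matrix
open scoped Classical ComplexOrder Kronecker

noncomputable section

namespace Grassmann

variable {ι κ : Type} [LinearOrder ι] [LinearOrder κ]

variable (M : Type) [Fintype M] [LinearOrder M]

lemma span_range_eq_top_of_injective {R E F ι : Type*} [Semiring R] [AddCommMonoid E]
    [AddCommMonoid F] [Module R E] [Module R F] {f : E →ₗ[R] F} (hf : Function.Injective f)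
    {v : ι → E} (hv : Submodule.span R (Set.range (f ∘ v)) = ⊤) :
    Submodule.span R (Set.range v) = ⊤ :=
  eq_top_iff.2 <| (Submodule.map_le_map_iff_of_injective hf _ _).1 <| by
    rw [Submodule.map_span, ← Set.range_comp, hv]
    exact le_top

section Anticommuting

variable {R : Type*} [Ring R]

lemma neg_one_pow_card_filter_insert_lt {α : Type*} [LinearOrder α] {a : α} {s : Finset α}
    (ha : a ∉ s) (b : α) :
    (-1 : R) ^ #((insert a s).filter (· < b)) =
      (if a < b then -1 else 1) * (-1) ^ #(s.filter (· < b)) := by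
  rw [Finset.filter_insert]
  split_ifs
  · rw [Finset.card_insert_of_notMem fun h => ha (Finset.mem_filter.1 h).1, pow_succ']
  · rw [one_mul]

lemma list_prod_mul_of_anticomm {a : R} {l : List R} (h : ∀ b ∈ l, a * b = -(b * a)) :
    l.prod * a = (-1) ^ l.length * (a * l.prod) := by
  induction l with
  | nil => simp
  | cons b l ih =>
    rw [List.forall_mem_cons] at h
    have hba : b * a = -(a * b) := by rw [h.1, neg_neg]
    rw [List.prod_cons, mul_assoc, ih h.2, ← mul_assoc,
      ← ((Commute.neg_one_left b).pow_left _).eq, mul_assoc, ← mul_assoc b, hba, List.length_cons,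
      pow_succ]
    noncomm_ring

lemma list_prod_reverse_of_anticomm {l : List R}
    (h : l.Pairwise fun a b => a * b = -(b * a)) :
    l.reverse.prod = (-1) ^ l.length.choose 2 * l.prod := by
  induction l with
  | nil => simp
  | cons a l ih =>
    rw [List.pairwise_cons] at h
    rw [List.reverse_cons, List.prod_append, List.prod_singleton, ih h.2, mul_assoc,
      list_prod_mul_of_anticomm h.1, ← mul_assoc, ← pow_add, List.length_cons,
      Nat.choose_succ_succ', Nat.choose_one_right, add_comm, List.prod_cons]

lemma sort_map_reverse_prod {α : Type*} [LinearOrder α] {f : α → R}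
    (hf : Pairwise fun i j => f i * f j = -(f j * f i)) (s : Finset α) :
    ((s.sort (· ≤ ·)).map f).reverse.prod =
      (-1) ^ (#s).choose 2 * ((s.sort (· ≤ ·)).map f).prod := by
  rw [list_prod_reverse_of_anticomm ((Finset.sortedLT_sort s).pairwise.map f fun _ _ h => hf h.ne),
    List.length_map, Finset.length_sort]

end Anticommuting

section Monomials

variable {ι : Type} [LinearOrder ι]

lemma gone_eq_single : (gone : Car ι) = Pi.single ∅ 1 :=
  funext fun _ => (Pi.single_apply _ _ _).symm

lemma gen_eq_single (x : ι) : (gen x : Car ι) = Pi.single {x} 1 :=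
  funext fun _ => (Pi.single_apply _ _ _).symm

lemma gmul_single_single {S T : Finset ι} (hST : Disjoint S T) (a b : ℂ) :
    gmul (Pi.single S a) (Pi.single T b) = Pi.single (S ∪ T) (mulSign S T * a * b) := by
  funext u
  have hu : (S ⊆ u ∧ u \ S = T) ↔ u = S ∪ T := by
    constructor
    · rintro ⟨hSu, rfl⟩
      exact (Finset.union_sdiff_of_subset hSu).symm
    · rintro rfl
      exact ⟨Finset.subset_union_left, Finset.union_sdiff_cancel_left hST⟩
  simp only [gmul, Pi.single_apply, mul_ite, mul_zero]
  by_cases hSu : S ⊆ u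
  · rw [Finset.sum_eq_single_of_mem S (Finset.mem_powerset.2 hSu) fun s _ hs => by simp [hs]]
    simp only [← hu, hSu, true_and]
    split_ifs <;> simp_all
  · rw [Finset.sum_eq_zero fun s hs => ?_, if_neg (by tauto)]
    rw [if_neg fun h : s = S => hSu (h ▸ Finset.mem_powerset.1 hs), zero_mul, ite_self]

lemma mulSign_of_forall_lt {S T : Finset ι} (h : ∀ x ∈ S, ∀ y ∈ T, x < y) :
    mulSign S T = 1 := by
  rw [mulSign, Finset.filter_false_of_mem, Finset.card_empty, pow_zero]
  rintro ⟨x, y⟩ hxy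
  obtain ⟨hx, hy⟩ := Finset.mem_product.1 hxy
  exact (h x hx y hy).not_gt

lemma mulSign_of_forall_gt {S T : Finset ι} (h : ∀ x ∈ S, ∀ y ∈ T, y < x) :
    mulSign S T = (-1) ^ (#S * #T) := by
  rw [mulSign, Finset.filter_true_of_mem, Finset.card_product]
  rintro ⟨x, y⟩ hxy
  obtain ⟨hx, hy⟩ := Finset.mem_product.1 hxy
  exact h x hx y hy

lemma lprod_map_gen {l : List ι} (hl : l.Pairwise (· < ·)) :
    lprod (l.map gen) = Pi.single l.toFinset 1 := by
  induction l with
  | nil => exact gone_eq_single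
  | cons x t ih =>
    have hx : ∀ y ∈ t.toFinset, x < y := fun y hy =>
      List.rel_of_pairwise_cons hl (List.mem_toFinset.1 hy)
    have hdisj : Disjoint {x} t.toFinset :=
      Finset.disjoint_singleton_left.2 fun hxt => (hx x hxt).false
    change gmul (gen x) (lprod (t.map gen)) = _
    rw [ih hl.of_cons, gen_eq_single, gmul_single_single hdisj,
      mulSign_of_forall_lt fun x' hx' => Finset.mem_singleton.1 hx' ▸ hx, List.toFinset_cons,
      Finset.insert_eq, one_mul, one_mul]

lemma lprod_map_gen_sort {α : Type} [LinearOrder α] {f : α → ι} (hf : StrictMono f)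
    (s : Finset α) : lprod ((s.sort (· ≤ ·)).map (gen ∘ f)) = Pi.single (s.image f) 1 := by
  rw [← List.map_map, lprod_map_gen ((Finset.sortedLT_sort s).pairwise.map f fun _ _ h => hf h)]
  congr 1
  ext
  simp

end Monomials

section NormalMonomials

variable (M : Type)

def psiIdx (i : M) : Idx M := toLex (false, i)

def psibarIdx (i : M) : Idx M := toLex (true, i)

lemma barSwap_psiIdx (i : M) : barSwap M (psiIdx M i) = psibarIdx M i := rfl

lemma barSwap_psibarIdx (i : M) : barSwap M (psibarIdx M i) = psiIdx M i := rfl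

lemma barSwap_involutive : Function.Involutive (barSwap M) := fun _ => by simp [barSwap]

variable [LinearOrder M]

lemma psiIdx_strictMono : StrictMono (psiIdx M) := fun _ _ h =>
  Prod.Lex.lt_iff.2 (.inr ⟨rfl, h⟩)

lemma psibarIdx_strictMono : StrictMono (psibarIdx M) := fun _ _ h =>
  Prod.Lex.lt_iff.2 (.inr ⟨rfl, h⟩)

lemma psiIdx_lt_psibarIdx (i j : M) : psiIdx M i < psibarIdx M j :=
  Prod.Lex.lt_iff.2 (.inl Bool.false_lt_true)

lemma not_psibarIdx_lt_psiIdx (i j : M) : ¬ psibarIdx M i < psiIdx M j :=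
  (psiIdx_lt_psibarIdx M j i).not_gt

lemma psiIdx_ne_psibarIdx (i j : M) : psiIdx M i ≠ psibarIdx M j :=
  (psiIdx_lt_psibarIdx M i j).ne

def nmonoSupport (I J : Finset M) : Finset (Idx M) := I.image (psibarIdx M) ∪ J.image (psiIdx M)

lemma disjoint_image_psibarIdx_psiIdx (I J : Finset M) :
    Disjoint (I.image (psibarIdx M)) (J.image (psiIdx M)) := by
  simp only [Finset.disjoint_left, Finset.mem_image]
  rintro _ ⟨i, -, rfl⟩ ⟨j, -, hj⟩
  exact psiIdx_ne_psibarIdx M j i hj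

-- Every `ψ` precedes every `ψ̄` in `Idx M`, so sorting `ψ̄_I ψ_J` crosses all `#I * #J` pairs.
lemma nmono_eq_single (I J : Finset M) :
    nmono M I J = Pi.single (nmonoSupport M I J) ((-1) ^ (#I * #J)) := by
  have hbar : psibarProd M I = Pi.single (I.image (psibarIdx M)) 1 :=
    lprod_map_gen_sort (psibarIdx_strictMono M) I
  have hpsi : psiProd M J = Pi.single (J.image (psiIdx M)) 1 :=
    lprod_map_gen_sort (psiIdx_strictMono M) J
  rw [nmono, hbar, hpsi, gmul_single_single (disjoint_image_psibarIdx_psiIdx M I J),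
    mulSign_of_forall_gt, Finset.card_image_of_injective _ (psibarIdx_strictMono M).injective,
    Finset.card_image_of_injective _ (psiIdx_strictMono M).injective, mul_one, mul_one,
    nmonoSupport]
  simp only [Finset.mem_image]
  rintro _ ⟨i, -, rfl⟩ _ ⟨j, -, rfl⟩
  exact psiIdx_lt_psibarIdx M j i

lemma nmonoSupport_surjective :
    Function.Surjective fun p : Finset M × Finset M => nmonoSupport M p.1 p.2 := by
  intro S
  refine ⟨(S.preimage (psibarIdx M) (psibarIdx_strictMono M).injective.injOn,
    S.preimage (psiIdx M) (psiIdx_strictMono M).injective.injOn), ?_⟩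
  dsimp only
  rw [nmonoSupport, Finset.image_preimage, Finset.image_preimage, ← Finset.filter_or,
    Finset.filter_true_of_mem]
  rintro ⟨_ | _, i⟩ -
  exacts [.inr ⟨i, rfl⟩, .inl ⟨i, rfl⟩]

lemma span_range_nmono [Fintype M] :
    Submodule.span ℂ (Set.range fun p : Finset M × Finset M => nmono M p.1 p.2) = ⊤ := by
  refine eq_top_iff.2 <|
    (Pi.basisFun ℂ (Finset (Idx M))).span_eq.ge.trans (Submodule.span_le.2 ?_)
  rintro _ ⟨S, rfl⟩
  obtain ⟨⟨I, J⟩, rfl⟩ := nmonoSupport_surjective M S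
  have hsingle :
      Pi.basisFun ℂ _ (nmonoSupport M I J) = (-1 : ℂ) ^ (#I * #J) • nmono M I J := by
    simp [nmono_eq_single, ← Pi.single_smul', ← mul_pow]
  rw [hsingle]
  exact Submodule.smul_mem _ _ (Submodule.subset_span ⟨(I, J), rfl⟩)

end NormalMonomials

section Involution

variable (M : Type) [LinearOrder M]

def ginvolₛₗ : Car (Idx M) →ₗ⋆[ℂ] Car (Idx M) where
  toFun := ginvol M
  map_add' f g := funext fun t => by simp [ginvol, mul_add]
  map_smul' c f := funext fun t => by simp [ginvol, mul_left_comm]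

lemma ginvol_single (S : Finset (Idx M)) (c : ℂ) :
    ginvol M (Pi.single S c) = Pi.single (S.image (barSwap M)) (involSign M S * star c) := by
  funext t
  have hinv : ∀ s : Finset (Idx M), (s.image (barSwap M)).image (barSwap M) = s := fun s => by
    rw [Finset.image_image, (barSwap_involutive M).comp_self, Finset.image_id]
  by_cases ht : t = S.image (barSwap M)
  · subst ht
    simp [ginvol, hinv]
  · have : t.image (barSwap M) ≠ S := fun h => ht (h ▸ (hinv t).symm)
    simp [ginvol, ht, this]

lemma image_barSwap_nmonoSupport (I J : Finset M) :
    (nmonoSupport M I J).image (barSwap M) = nmonoSupport M J I := by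
  rw [nmonoSupport, Finset.image_union, Finset.image_image, Finset.image_image, nmonoSupport,
    Finset.union_comm]
  rfl

lemma involSign_nmonoSupport (I J : Finset M) :
    involSign M (nmonoSupport M I J) = (-1) ^ ((#I).choose 2 + (#J).choose 2) := by
  set A := I.image (psibarIdx M)
  set B := J.image (psiIdx M)
  have hfilter :
      ((A ∪ B) ×ˢ (A ∪ B)).filter (fun p => p.1 < p.2 ∧ barSwap M p.1 < barSwap M p.2) =
        (A ×ˢ A).filter (fun p => p.1 < p.2) ∪ (B ×ˢ B).filter (fun p => p.1 < p.2) := by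
    ext ⟨x, y⟩
    simp only [A, B, Finset.mem_filter, Finset.mem_union, Finset.mem_product, Finset.mem_image]
    constructor
    · rintro ⟨⟨⟨i, hi, rfl⟩ | ⟨i, hi, rfl⟩, ⟨j, hj, rfl⟩ | ⟨j, hj, rfl⟩⟩, hlt, hswap⟩ <;>
        simp_all [psiIdx_lt_psibarIdx, not_psibarIdx_lt_psiIdx, barSwap_psiIdx, barSwap_psibarIdx,
          (psiIdx_strictMono M).injective.eq_iff, (psibarIdx_strictMono M).injective.eq_iff]
    · rintro (⟨⟨⟨i, hi, rfl⟩, ⟨j, hj, rfl⟩⟩, hlt⟩ | ⟨⟨⟨i, hi, rfl⟩, ⟨j, hj, rfl⟩⟩, hlt⟩) <;>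
        simp_all [barSwap_psiIdx, barSwap_psibarIdx, (psiIdx_strictMono M).lt_iff_lt,
          (psibarIdx_strictMono M).lt_iff_lt, (psiIdx_strictMono M).injective.eq_iff,
          (psibarIdx_strictMono M).injective.eq_iff]
  have hdisj :
      Disjoint ((A ×ˢ A).filter (fun p => p.1 < p.2)) ((B ×ˢ B).filter (fun p => p.1 < p.2)) :=
    Finset.disjoint_filter_filter (Finset.disjoint_product.2
      (.inl (disjoint_image_psibarIdx_psiIdx M I J)))
  rw [involSign, nmonoSupport, hfilter, Finset.card_union_of_disjoint hdisj,
    Finset.card_product_filter_lt, Finset.card_product_filter_lt,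
    Finset.card_image_of_injective _ (psibarIdx_strictMono M).injective,
    Finset.card_image_of_injective _ (psiIdx_strictMono M).injective, pow_add]

lemma ginvol_nmono (I J : Finset M) :
    ginvol M (nmono M I J) = ((-1 : ℂ) ^ ((#I).choose 2 + (#J).choose 2)) • nmono M J I := by
  rw [nmono_eq_single, ginvol_single, image_barSwap_nmonoSupport, involSign_nmonoSupport,
    nmono_eq_single, ← Pi.single_smul']
  congr 1
  simp [mul_comm]

end Involution



section Annihilation

variable (M : Type) [LinearOrder M]

lemma annihL_mul_annihL {i j : M} (hij : i ≠ j) :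
    annihL M i * annihL M j = -(annihL M j * annihL M i) := by
  refine LinearMap.ext fun f => funext fun s => ?_
  simp only [Module.End.mul_apply, LinearMap.neg_apply, Pi.neg_apply, annihL, LinearMap.coe_mk,
    AddHom.coe_mk, Finset.mem_insert]
  by_cases hi : i ∈ s
  · simp [hi]
  by_cases hj : j ∈ s
  · simp [hj]
  simp only [hi, hj, hij, hij.symm, or_self, if_false]
  rw [Finset.insert_comm, neg_one_pow_card_filter_insert_lt hi,
    neg_one_pow_card_filter_insert_lt hj]
  rcases hij.lt_or_gt with h | h <;> simp [h, h.not_gt] <;> ring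

end Annihilation

section Adjoint

variable (M : Type) [Fintype M] [LinearOrder M]

lemma adjOp_eq_toLin' (A : Fock M →ₗ[ℂ] Fock M) :
    adjOp M A = Matrix.toLin' (LinearMap.toMatrix' A)ᴴ := by
  rw [adjOp, LinearMap.toMatrix_eq_toMatrix', Matrix.toLin_eq_toLin']

lemma adjOp_adjOp (A : Fock M →ₗ[ℂ] Fock M) : adjOp M (adjOp M A) = A := by
  rw [adjOp_eq_toLin', adjOp_eq_toLin', LinearMap.toMatrix'_toLin', conjTranspose_conjTranspose,
    Matrix.toLin'_toMatrix']

lemma adjOp_one : adjOp M 1 = 1 := by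
  rw [adjOp_eq_toLin', LinearMap.toMatrix'_one, conjTranspose_one, Matrix.toLin'_one]
  rfl

lemma adjOp_mul (A B : Fock M →ₗ[ℂ] Fock M) : adjOp M (A * B) = adjOp M B * adjOp M A := by
  rw [adjOp_eq_toLin', adjOp_eq_toLin', adjOp_eq_toLin', LinearMap.toMatrix'_mul,
    conjTranspose_mul, Matrix.toLin'_mul]
  rfl

lemma adjOp_list_prod (l : List (Fock M →ₗ[ℂ] Fock M)) :
    adjOp M l.prod = (l.map (adjOp M)).reverse.prod := by
  induction l with
  | nil => exact adjOp_one M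
  | cons A l ih => rw [List.prod_cons, adjOp_mul, ih, List.map_cons, List.reverse_cons,
      List.prod_append, List.prod_singleton]

def adjOpₛₗ : (Fock M →ₗ[ℂ] Fock M) →ₗ⋆[ℂ] (Fock M →ₗ[ℂ] Fock M) where
  toFun := adjOp M
  map_add' A B := by simp only [adjOp_eq_toLin', map_add, conjTranspose_add]
  map_smul' c A := by simp only [adjOp_eq_toLin', map_smul, conjTranspose_smul]; rfl

lemma adjOpₛₗ_apply (A : Fock M →ₗ[ℂ] Fock M) : adjOpₛₗ M A = adjOp M A := rfl

lemma toMatrix'_annihL (i : M) :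
    LinearMap.toMatrix' (annihL M i) = (LinearMap.toMatrix' (createL M i))ᴴ := by
  ext s t
  simp only [LinearMap.toMatrix'_apply, conjTranspose_apply, annihL, createL,
    LinearMap.coe_mk, AddHom.coe_mk, Pi.single_apply]
  by_cases hi : i ∈ s
  · have hs : ∀ t' : Finset M, t'.erase i ≠ s := fun t' h =>
      Finset.notMem_erase i t' (h ▸ hi)
    simp [hi, hs]
  · by_cases ht : insert i s = t
    · subst ht
      simp [hi, Finset.erase_insert hi]
    · have hs : i ∈ t → t.erase i ≠ s := fun hit h => ht (h ▸ Finset.insert_erase hit)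
      by_cases hit : i ∈ t <;> simp [hi, ht, hit, hs]

lemma adjOp_createL (i : M) : adjOp M (createL M i) = annihL M i := by
  rw [adjOp_eq_toLin', ← toMatrix'_annihL, Matrix.toLin'_toMatrix']

lemma adjOp_annihL (i : M) : adjOp M (annihL M i) = createL M i := by
  rw [← adjOp_createL, adjOp_adjOp]

lemma createL_mul_createL {i j : M} (hij : i ≠ j) :
    createL M i * createL M j = -(createL M j * createL M i) := by
  simpa only [map_neg, adjOpₛₗ_apply, adjOp_mul, adjOp_annihL] using
    congrArg (adjOpₛₗ M) (annihL_mul_annihL M hij.symm)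

lemma adjOp_cOp (I J : Finset M) :
    adjOp M (cOp M I J) = ((-1 : ℂ) ^ ((#I).choose 2 + (#J).choose 2)) • cOp M J I := by
  have hcre : adjOp M ∘ createL M = annihL M := funext (adjOp_createL M)
  have hann : adjOp M ∘ annihL M = createL M := funext (adjOp_annihL M)
  rw [cOp, adjOp_mul, adjOp_list_prod, adjOp_list_prod, List.map_map, List.map_map, hcre, hann,
    msort, msort, sort_map_reverse_prod fun _ _ => createL_mul_createL M,
    sort_map_reverse_prod fun _ _ => annihL_mul_annihL M, cOp, msort, msort, Algebra.smul_def,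
    map_pow, map_neg, map_one, add_comm, pow_add]
  exact ((Commute.neg_one_right (((J.sort (· ≤ ·)).map (createL M)).prod)).pow_right _
    ).mul_mul_mul_comm _ _

end Adjoint


end Grassmann

open Grassmann in
/-- the normal-ordering map `Θ` is compatible with the involutions:
`Θ(A*) = (Θ(A))*` for every operator `A` on the fermion Fock space. -/
theorem statement9 (M : Type) [Fintype M] [LinearOrder M]
    (Θ : (Fock M →ₗ[ℂ] Fock M) → Car (Idx M))
    (hlin : IsLinearMap ℂ Θ) (hbij : Function.Bijective Θ)
    (hmono : ∀ I J : Finset M, Θ (cOp M I J) = nmono M I J)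
    (A : Fock M →ₗ[ℂ] Fock M) :
    Θ (adjOp M A) = ginvol M (Θ A) := by
  let Θₗ : (Fock M →ₗ[ℂ] Fock M) →ₗ[ℂ] Car (Idx M) := hlin.mk' Θ
  have hspan : Submodule.span ℂ (Set.range fun p : Finset M × Finset M => cOp M p.1 p.2) = ⊤ :=
    span_range_eq_top_of_injective (f := Θₗ) hbij.injective <| by
      simpa only [Function.comp_def, IsLinearMap.mk'_apply, Θₗ, hmono] using span_range_nmono M
  have hcOp : ∀ I J, Θ (adjOp M (cOp M I J)) = ginvol M (Θ (cOp M I J)) := fun I J => by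
    rw [adjOp_cOp, hlin.map_smul, hmono, hmono, ginvol_nmono]
  have hcomm : Θₗ.comp (adjOpₛₗ M) = (ginvolₛₗ M).comp Θₗ :=
    LinearMap.ext_on_range hspan fun p => hcOp p.1 p.2
  exact LinearMap.congr_fun hcomm A
end
end
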